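/- Let ξ ∈ ℝ³ be nonzero and let f ∈ L¹(ℝ³; ℂ). Define g : ℝ → ℂ by g(t) = ∫_{ℝ³} f(p) e^{−2πi(ξ·v(p))t} d³p. If there exist constants C > 0 and a > 0 such that |g(t)| ≤ C e^{−a|t|} for all t ∈ ℝ, then g(t) = 0 for every t ∈ ℝ. (In particular, no nontrivial spatial Fourier mode of the linearized relativistic Vlasov–Poisson system whose decay as t → −∞ matches its decay as t → +∞ can decay exponentially; this is the content of Theorems 1 and 3 of the paper.) -/

import Mathlib

/-!
Put `σ(p) = ξ · v(p)`, so that `g` is the Fourier transform of the pushforward of `f dp` under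
`σ`, a complex measure carried by `[-‖ξ‖, ‖ξ‖]` since `|v| < 1`. Pairing `ĝ` with Gaussians
shows that `ĝ(s) = 0` for `|s| > ‖ξ‖`. On the other hand, exponential decay of `g` makes `ĝ`
the restriction of a function holomorphic in the strip `|Im z| < a / 2π`, so `ĝ` vanishes
identically by the identity theorem, and then so does `g` by Fourier inversion.
-/

open MeasureTheory Real

/-- The relativistic velocity `v(p) = p / √(1+|p|²)` (units with `c = m = 1`). -/
noncomputable def relVel (p : EuclideanSpace ℝ (Fin 3)) : EuclideanSpace ℝ (Fin 3) :=
  (Real.sqrt (1 + ‖p‖ ^ 2))⁻¹ • p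

open Complex Filter Topology FourierTransform Set

lemma IntegrableOn.integrable_comp_abs {E : Type*} [NormedAddCommGroup E] {h : ℝ → E}
    (hh : IntegrableOn h (Ioi 0)) : Integrable (fun t => h |t|) := by
  have hpos : IntegrableOn (fun t => h |t|) (Ioi 0) :=
    hh.congr_fun (fun t ht => by rw [abs_of_pos ht]) measurableSet_Ioi
  have hneg : IntegrableOn (fun t => h |t|) (Iio 0) := by
    rw [← (Measure.measurePreserving_neg volume).integrableOn_comp_preimage
      (Homeomorph.neg ℝ).measurableEmbedding]
    simpa [Function.comp_def] using hpos
  rw [← integrableOn_univ, ← Iio_union_Ici (a := (0 : ℝ)), integrableOn_union,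
    integrableOn_Ici_iff_integrableOn_Ioi]
  exact ⟨hneg, hpos⟩

lemma integrable_exp_neg_mul_abs {a : ℝ} (ha : 0 < a) :
    Integrable (fun t : ℝ => rexp (-a * |t|)) :=
  IntegrableOn.integrable_comp_abs (exp_neg_integrableOn_Ioi 0 ha)

lemma integrable_abs_mul_exp_neg_mul_abs {a : ℝ} (ha : 0 < a) :
    Integrable (fun t : ℝ => |t| * rexp (-a * |t|)) := by
  refine IntegrableOn.integrable_comp_abs (h := fun t => t * rexp (-a * t)) ?_
  simpa using integrableOn_rpow_mul_exp_neg_mul_rpow (s := 1) (p := 1) (by norm_num) one_pos ha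

lemma integrable_of_norm_le_exp_neg_mul_abs {E : Type*} [NormedAddCommGroup E] {g : ℝ → E}
    {C a : ℝ} (hg : AEStronglyMeasurable g) (ha : 0 < a)
    (hdecay : ∀ t, ‖g t‖ ≤ C * rexp (-a * |t|)) : Integrable g :=
  ((integrable_exp_neg_mul_abs ha).const_mul C).mono' hg (ae_of_all _ hdecay)

noncomputable def complexFourier (g : ℝ → ℂ) (z : ℂ) : ℂ :=
  ∫ t : ℝ, cexp (-2 * π * I * t * z) * g t

lemma complexFourier_ofReal (g : ℝ → ℂ) (s : ℝ) : complexFourier g s = 𝓕 g s := by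
  rw [Real.fourier_real_eq_integral_exp_smul, complexFourier]
  congr with t
  rw [smul_eq_mul]
  push_cast
  ring_nf

lemma norm_cexp_neg_two_pi_I_mul (t : ℝ) (z : ℂ) :
    ‖cexp (-2 * π * I * t * z)‖ = rexp (2 * π * t * z.im) := by
  rw [Complex.norm_exp]
  simp

section ExpDecay

variable {g : ℝ → ℂ} {C a : ℝ}

lemma norm_cexp_mul_le_of_abs_im_le (hdecay : ∀ t, ‖g t‖ ≤ C * rexp (-a * |t|)) {b : ℝ}
    {z : ℂ} (hz : |z.im| ≤ b) (t : ℝ) :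
    ‖cexp (-2 * π * I * t * z) * g t‖ ≤ C * rexp (-(a - 2 * π * b) * |t|) := by
  have hexp : 2 * π * t * z.im ≤ 2 * π * |t| * b := by
    calc 2 * π * t * z.im ≤ |2 * π * t * z.im| := le_abs_self _
      _ = 2 * π * |t| * |z.im| := by simp [abs_mul, abs_of_pos pi_pos]
      _ ≤ 2 * π * |t| * b := by gcongr
  calc ‖cexp (-2 * π * I * t * z) * g t‖
      ≤ rexp (2 * π * |t| * b) * (C * rexp (-a * |t|)) := by
        rw [norm_mul, norm_cexp_neg_two_pi_I_mul]
        gcongr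
        exact hdecay t
    _ = C * rexp (-(a - 2 * π * b) * |t|) := by
        rw [mul_left_comm, ← Real.exp_add]
        ring_nf

lemma differentiableOn_complexFourier (hg : Continuous g)
    (hdecay : ∀ t, ‖g t‖ ≤ C * rexp (-a * |t|)) :
    DifferentiableOn ℂ (complexFourier g) {z | |z.im| < a / (2 * π)} := by
  intro z₀ (hz₀ : |z₀.im| < a / (2 * π))
  obtain ⟨b, hz₀b, hba⟩ := exists_between hz₀
  have hc : 0 < a - 2 * π * b := by
    rw [lt_div_iff₀ (by positivity)] at hba
    linarith
  have him : ∀ z ∈ Metric.ball z₀ (b - |z₀.im|), |z.im| ≤ b := fun z hz => by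
    have : |z.im - z₀.im| < b - |z₀.im| := by
      simpa using (abs_im_le_norm (z - z₀)).trans_lt (mem_ball_iff_norm.1 hz)
    linarith [abs_sub_abs_le_abs_sub z.im z₀.im]
  have hmeas : ∀ z : ℂ, AEStronglyMeasurable (fun t : ℝ => cexp (-2 * π * I * t * z) * g t) :=
    fun z => (by fun_prop : Continuous _).aestronglyMeasurable
  refine (hasDerivAt_integral_of_dominated_loc_of_deriv_le
    (F' := fun z t => -2 * π * I * t * (cexp (-2 * π * I * t * z) * g t))
    (bound := fun t => 2 * π * C * (|t| * rexp (-(a - 2 * π * b) * |t|)))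
    (Metric.ball_mem_nhds z₀ (sub_pos.2 hz₀b)) (Eventually.of_forall hmeas) ?_ ?_ ?_ ?_ ?_)
    |>.2.differentiableAt.differentiableWithinAt
  · exact ((integrable_exp_neg_mul_abs hc).const_mul C).mono' (hmeas z₀)
      (ae_of_all _ (norm_cexp_mul_le_of_abs_im_le hdecay hz₀b.le))
  · exact (by fun_prop : Continuous _).aestronglyMeasurable
  · refine ae_of_all _ fun t z hz => ?_
    rw [norm_mul]
    calc ‖-2 * π * I * t‖ * ‖cexp (-2 * π * I * t * z) * g t‖
        ≤ (2 * π * |t|) * (C * rexp (-(a - 2 * π * b) * |t|)) := by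
          gcongr
          · simp [abs_of_pos pi_pos]
          · exact norm_cexp_mul_le_of_abs_im_le hdecay (him z hz) t
      _ = _ := by ring
  · exact (integrable_abs_mul_exp_neg_mul_abs hc).const_mul _
  · refine ae_of_all _ fun t z _ => ?_
    exact (((hasDerivAt_id' z).const_mul _).cexp.mul_const (g t)).congr_deriv (by ring)

lemma eq_zero_of_exp_decay_of_fourier_eq_zero (hg : Continuous g) (ha : 0 < a)
    (hdecay : ∀ t, ‖g t‖ ≤ C * rexp (-a * |t|)) {R : ℝ} (hR : ∀ s, R < s → 𝓕 g s = 0) :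
    g = 0 := by
  set S : Set ℂ := {z | |z.im| < a / (2 * π)}
  have hS_real : ∀ s : ℝ, (s : ℂ) ∈ S := fun s => by
    simp only [S, mem_ofPred_eq, ofReal_im, abs_zero]; positivity
  have hS_open : IsOpen S := isOpen_lt (by fun_prop) continuous_const
  have hS_conv : Convex ℝ S := by
    simpa only [S, abs_lt, ofPred_and] using
      (convex_halfSpace_im_gt (-(a / (2 * π)))).inter (convex_halfSpace_im_lt (a / (2 * π)))
  have hvanish_near : ∃ᶠ z in 𝓝[≠] ((R + 1 : ℝ) : ℂ), complexFourier g z = 0 := by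
    have hmap : Tendsto ((↑) : ℝ → ℂ) (𝓝[>] (R + 1)) (𝓝[≠] ((R + 1 : ℝ) : ℂ)) :=
      tendsto_nhdsWithin_of_tendsto_nhds_of_eventually_within _
        (continuous_ofReal.tendsto _ |>.mono_left nhdsWithin_le_nhds)
        (eventually_nhdsWithin_of_forall fun s (hs : R + 1 < s) =>
          ofReal_injective.ne hs.ne')
    refine hmap.frequently (Eventually.frequently ?_)
    filter_upwards [self_mem_nhdsWithin] with s (hs : R + 1 < s)
    rw [complexFourier_ofReal, hR s (by linarith)]
  have hH : EqOn (complexFourier g) 0 S :=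
    ((differentiableOn_complexFourier hg hdecay).analyticOnNhd hS_open)
      |>.eqOn_zero_of_preconnected_of_frequently_eq_zero hS_conv.isPreconnected
        (hS_real _) hvanish_near
  have hFg : 𝓕 g = 0 := funext fun s => by rw [← complexFourier_ofReal]; exact hH (hS_real s)
  have hint : Integrable g :=
    integrable_of_norm_le_exp_neg_mul_abs hg.aestronglyMeasurable ha hdecay
  ext t
  rw [← hint.fourierInv_fourier_eq (hFg ▸ integrable_zero _ _ _) hg.continuousAt, hFg]
  simp [Real.fourierInv_eq]

end ExpDecay

section Pushforward

variable {α : Type*} [MeasurableSpace α] {μ : Measure α} {f : α → ℂ} {σ : α → ℝ}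

noncomputable def fourierPushforward (μ : Measure α) (f : α → ℂ) (σ : α → ℝ) (t : ℝ) : ℂ :=
  ∫ x, f x * cexp (-2 * π * I * σ x * t) ∂μ

lemma continuous_fourierPushforward (hf : Integrable f μ) (hσ : AEMeasurable σ μ) :
    Continuous (fourierPushforward μ f σ) :=
  continuous_of_dominated
    (fun t => hf.1.mul ((by fun_prop : Continuous fun u : ℝ => cexp (-2 * π * I * u * t))
      |>.measurable.comp_aemeasurable hσ).aestronglyMeasurable)
    (fun t => ae_of_all _ fun x => by rw [norm_mul, norm_cexp_neg_two_pi_I_mul]; simp) hf.norm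
    (ae_of_all _ fun x => by fun_prop)

lemma integral_gaussian_smul_fourierChar_smul_fourierPushforward [SFinite μ]
    (hf : Integrable f μ) (hσ : AEMeasurable σ μ) {c : ℝ} (hc : 0 < c) (s : ℝ) :
    ∫ t : ℝ, cexp (-c⁻¹ * ‖t‖ ^ 2) • (𝐞 (-(t * s)) • fourierPushforward μ f σ t) =
      ∫ x, f x * ((π * c) ^ (1 / 2 : ℂ) * cexp (-π ^ 2 * c * (s + σ x) ^ 2)) ∂μ := by
  set F : ℝ → α → ℂ := fun t x =>
    f x * (cexp (I * ↑(-2 * π * (s + σ x)) * t) * cexp (-(c : ℂ)⁻¹ * t ^ 2))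
  have hF : ∀ t, cexp (-c⁻¹ * ‖t‖ ^ 2) • (𝐞 (-(t * s)) • fourierPushforward μ f σ t) =
      ∫ x, F t x ∂μ := fun t => by
    simp only [fourierPushforward, Circle.smul_def, smul_eq_mul, ← integral_const_mul]
    congr with x
    have hexp : ∀ u v w : ℂ, cexp u * (cexp v * (f x * cexp w)) = f x * cexp (u + v + w) :=
      fun u v w => by simp only [Complex.exp_add]; ring
    rw [← ofReal_pow, Real.norm_eq_abs, sq_abs, Real.fourierChar_apply, hexp]
    simp only [F, ← Complex.exp_add]
    congr 2
    push_cast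
    ring
  have hF_int : Integrable (Function.uncurry F) (volume.prod μ) := by
    refine ((integrable_exp_neg_mul_sq (inv_pos.2 hc)).mul_prod hf.norm).mono' ?_ ?_
    · have hcont : Continuous fun p : ℝ × ℝ =>
          cexp (I * ↑(-2 * π * (s + p.2)) * p.1) * cexp (-(c : ℂ)⁻¹ * p.1 ^ 2) := by fun_prop
      exact hf.1.comp_snd.mul (hcont.measurable.comp_aemeasurable
        (measurable_fst.aemeasurable.prodMk hσ.comp_snd)).aestronglyMeasurable
    · refine ae_of_all _ fun ⟨t, x⟩ => le_of_eq ?_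
      simp [F, Complex.norm_exp, mul_comm, pow_two]
  simp_rw [hF]
  rw [integral_integral_swap hF_int]
  congr with x
  rw [integral_const_mul, fourierIntegral_gaussian (by simpa using hc)]
  congr 2
  · rw [div_inv_eq_mul]
  · push_cast
    congr 1
    field_simp
    ring

lemma fourier_fourierPushforward_eq_zero [SFinite μ] (hf : Integrable f μ)
    (hσ : AEMeasurable σ μ) {R : ℝ} (hσR : ∀ x, |σ x| ≤ R)
    (hint : Integrable (fourierPushforward μ f σ)) {s : ℝ} (hs : R < |s|) :
    𝓕 (fourierPushforward μ f σ) s = 0 := by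
  set G := fourierPushforward μ f σ
  set d := |s| - R
  have hd : 0 < d := sub_pos.2 hs
  have hlim : Tendsto (fun c : ℝ => ∫ t : ℝ, cexp (-c⁻¹ * ‖t‖ ^ 2) • (𝐞 (-(t * s)) • G t))
      atTop (𝓝 (𝓕 G s)) := by
    rw [Real.fourier_real_eq]
    refine Real.tendsto_integral_cexp_sq_smul (hint.norm.mono' ?_ (ae_of_all _ fun t => ?_))
    · exact ((Real.continuous_fourierChar.comp (by fun_prop)).aestronglyMeasurable).smul hint.1
    · rw [Circle.norm_smul]
  have hbound : ∀ c : ℝ, 0 < c → ‖∫ t : ℝ, cexp (-c⁻¹ * ‖t‖ ^ 2) • (𝐞 (-(t * s)) • G t)‖ ≤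
      (∫ x, ‖f x‖ ∂μ) * π ^ (1 / 2 : ℝ) * (c ^ (1 / 2 : ℝ) * rexp (-(π ^ 2 * d ^ 2) * c)) := by
    intro c hc
    rw [integral_gaussian_smul_fourierChar_smul_fourierPushforward hf hσ hc, mul_assoc,
      ← integral_mul_const]
    refine (norm_integral_le_integral_norm _).trans (integral_mono_of_nonneg
      (ae_of_all _ fun _ => norm_nonneg _) (hf.norm.mul_const _) (ae_of_all _ fun x => ?_))
    have hsq : d ^ 2 ≤ (s + σ x) ^ 2 := by
      rw [← sq_abs (s + σ x)]
      gcongr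
      linarith [abs_sub_abs_le_abs_add s (σ x), hσR x]
    dsimp only
    rw [norm_mul, norm_mul, ← ofReal_mul, Complex.norm_cpow_eq_rpow_re_of_pos (by positivity),
      Real.mul_rpow pi_pos.le hc.le, Complex.norm_exp, mul_assoc (π ^ _)]
    have hre : (-π ^ 2 * c * (s + σ x) ^ 2 : ℂ).re = -π ^ 2 * c * (s + σ x) ^ 2 := by norm_cast
    have hhalf : (1 / 2 : ℂ).re = 1 / 2 := by norm_num
    rw [hre, hhalf]
    gcongr ‖f x‖ * (π ^ _ * (c ^ _ * rexp ?_))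
    nlinarith [mul_le_mul_of_nonneg_left hsq (by positivity : 0 ≤ π ^ 2 * c)]
  have hzero : Tendsto (fun c : ℝ => (∫ x, ‖f x‖ ∂μ) * π ^ (1 / 2 : ℝ) *
      (c ^ (1 / 2 : ℝ) * rexp (-(π ^ 2 * d ^ 2) * c))) atTop (𝓝 0) := by
    simpa using (tendsto_rpow_mul_exp_neg_mul_atTop_nhds_zero _ _ (by positivity)).const_mul
      ((∫ x, ‖f x‖ ∂μ) * π ^ (1 / 2 : ℝ))
  exact tendsto_nhds_unique hlim
    (squeeze_zero_norm' ((eventually_gt_atTop 0).mono hbound) hzero)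

end Pushforward

lemma continuous_relVel : Continuous relVel :=
  (Continuous.inv₀ (f := fun p : EuclideanSpace ℝ (Fin 3) => √(1 + ‖p‖ ^ 2)) (by fun_prop)
    fun p => by positivity).smul continuous_id

lemma norm_relVel_lt_one (p : EuclideanSpace ℝ (Fin 3)) : ‖relVel p‖ < 1 := by
  rw [relVel, norm_smul, norm_inv, Real.norm_of_nonneg (sqrt_nonneg _),
    inv_mul_lt_iff₀ (by positivity), mul_one, Real.lt_sqrt (norm_nonneg p)]
  linarith

lemma abs_inner_relVel_le (ξ p : EuclideanSpace ℝ (Fin 3)) : |inner ℝ ξ (relVel p)| ≤ ‖ξ‖ :=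
  (abs_real_inner_le_norm _ _).trans
    (mul_le_of_le_one_right (norm_nonneg ξ) (norm_relVel_lt_one p).le)

theorem no_exponential_decay_of_modes
    (ξ : EuclideanSpace ℝ (Fin 3))
    (f : EuclideanSpace ℝ (Fin 3) → ℂ) (hf : Integrable f)
    (g : ℝ → ℂ)
    (hg : ∀ t : ℝ, g t =
      ∫ p : EuclideanSpace ℝ (Fin 3),
        f p * Complex.exp (-2 * (Real.pi : ℂ) * Complex.I *
          ((inner ℝ ξ (relVel p) : ℝ) : ℂ) * (t : ℂ)))
    (C a : ℝ) (ha : 0 < a)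
    (hdecay : ∀ t : ℝ, ‖g t‖ ≤ C * Real.exp (-a * |t|)) :
    ∀ t : ℝ, g t = 0 := by
  have hσ : Continuous fun p => inner ℝ ξ (relVel p) := continuous_const.inner continuous_relVel
  have hgσ : g = fourierPushforward volume f fun p => inner ℝ ξ (relVel p) := funext hg
  have hg_cont : Continuous g := hgσ ▸ continuous_fourierPushforward hf hσ.aemeasurable
  have hg_int : Integrable g :=
    integrable_of_norm_le_exp_neg_mul_abs hg_cont.aestronglyMeasurable ha hdecay
  refine congrFun (eq_zero_of_exp_decay_of_fourier_eq_zero hg_cont ha hdecay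
    (R := ‖ξ‖) fun s hs => ?_)
  rw [hgσ] at hg_int ⊢
  exact fourier_fourierPushforward_eq_zero hf hσ.aemeasurable (abs_inner_relVel_le ξ) hg_int
    (hs.trans_le (le_abs_self s))
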